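/- Let f_n: X → X be maps on a metric space (X,d) and P, Q two increasing sequences in ℕ. Then there exists an increasing sequence T contained in P ∪ Q such that AR(P) ∩ DR(Q) ⊆ DSR(T), where AR(P) = {(x,y) : lim_{i→∞} d(f_0^{p_i}(x), f_0^{p_i}(y)) = 0}, DR(Q) = {(x,y) : liminf_{i→∞} d(f_0^{q_i}(x), f_0^{q_i}(y)) > 0}, and DSR(T) is the set of distributionally scrambled pairs in the sequence T. -/
import Mathlib

open Filter Metric Set
open scoped Classical

/-- Trajectory of the non-autonomous system: `orb f n = f_{n-1} ∘ ⋯ ∘ f_0`, `orb f 0 = id`. -/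
def orb {X : Type*} (f : ℕ → X → X) : ℕ → X → X
  | 0 => id
  | n + 1 => fun x => f n (orb f n x)

/-- Cesàro average of the indicator of `dist (f_0^{p i} x) (f_0^{p i} y) < ε` over `i < n`. -/
noncomputable def distAvg {X : Type*} [MetricSpace X] (f : ℕ → X → X) (p : ℕ → ℕ)
    (x y : X) (ε : ℝ) (n : ℕ) : ℝ :=
  (∑ i ∈ Finset.range n, if dist (orb f (p i) x) (orb f (p i) y) < ε then (1 : ℝ) else 0) / n

/-- Block index of `n`: `blk n = k+1` iff `(k+1)! ≤ n < (k+2)!`, and `blk 0 = 0`. -/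
def blk (n : ℕ) : ℕ := ((Finset.range (n+1)).filter (fun k => Nat.factorial (k+1) ≤ n)).card

lemma blk_eq {k n : ℕ} (h1 : Nat.factorial (k+1) ≤ n) (h2 : n < Nat.factorial (k+2)) :
    blk n = k + 1 := by
  unfold blk
  have hset : (Finset.range (n+1)).filter (fun j => Nat.factorial (j+1) ≤ n)
      = Finset.range (k+1) := by
    ext j
    simp only [Finset.mem_filter, Finset.mem_range]
    constructor
    · rintro ⟨-, hj⟩
      by_contra hjk
      push_neg at hjk
      have : Nat.factorial (k+2) ≤ Nat.factorial (j+1) := Nat.factorial_le (by omega)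
      omega
    · intro hj
      have hf : Nat.factorial (j+1) ≤ Nat.factorial (k+1) := Nat.factorial_le (by omega)
      have hle : Nat.factorial (j+1) ≤ n := le_trans hf h1
      have : j + 1 ≤ Nat.factorial (j+1) := Nat.self_le_factorial _
      exact ⟨by omega, hle⟩
  rw [hset, Finset.card_range]

lemma blk_zero : blk 0 = 0 := by decide

/-- The interleaved sequence. -/
def tseq (p q : ℕ → ℕ) : ℕ → ℕ
  | 0 => if blk 0 % 2 = 0 then p 0 else q 0
  | n+1 => if blk (n+1) % 2 = 0 then p (tseq p q n + 1) else q (tseq p q n + 1)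

lemma tseq_strictMono {p q : ℕ → ℕ} (hp : StrictMono p) (hq : StrictMono q) :
    StrictMono (tseq p q) := by
  apply strictMono_nat_of_lt_succ
  intro n
  show tseq p q n < if blk (n+1) % 2 = 0 then p (tseq p q n + 1) else q (tseq p q n + 1)
  split
  · exact lt_of_lt_of_le (Nat.lt_succ_self _) hp.le_apply
  · exact lt_of_lt_of_le (Nat.lt_succ_self _) hq.le_apply

lemma tseq_mem (p q : ℕ → ℕ) (n : ℕ) : tseq p q n ∈ Set.range p ∪ Set.range q := by
  cases n with
  | zero =>
    show (if blk 0 % 2 = 0 then p 0 else q 0) ∈ _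
    split
    · exact Or.inl ⟨0, rfl⟩
    · exact Or.inr ⟨0, rfl⟩
  | succ n =>
    show (if blk (n+1) % 2 = 0 then p (tseq p q n + 1) else q (tseq p q n + 1)) ∈ _
    split
    · exact Or.inl ⟨_, rfl⟩
    · exact Or.inr ⟨_, rfl⟩

lemma tseq_p {p q : ℕ → ℕ} (hp : StrictMono p) (hq : StrictMono q) {n : ℕ}
    (h : blk n % 2 = 0) : ∃ m, n ≤ m ∧ tseq p q n = p m := by
  cases n with
  | zero => exact ⟨0, le_refl _, by simp [tseq, blk_zero]⟩
  | succ n =>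
    refine ⟨tseq p q n + 1, ?_, by simp [tseq, h]⟩
    have := (tseq_strictMono hp hq).le_apply (x := n)
    omega

lemma tseq_q {p q : ℕ → ℕ} (hp : StrictMono p) (hq : StrictMono q) {n : ℕ}
    (h : blk n % 2 ≠ 0) : ∃ m, n ≤ m ∧ tseq p q n = q m := by
  cases n with
  | zero => simp [blk_zero] at h
  | succ n =>
    refine ⟨tseq p q n + 1, ?_, by simp [tseq, h]⟩
    have := (tseq_strictMono hp hq).le_apply (x := n)
    omega

lemma distAvg_nonneg {X : Type*} [MetricSpace X] (f : ℕ → X → X) (p : ℕ → ℕ)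
    (x y : X) (ε : ℝ) (n : ℕ) : 0 ≤ distAvg f p x y ε n := by
  apply div_nonneg _ (Nat.cast_nonneg n)
  apply Finset.sum_nonneg
  intro i _
  split <;> norm_num

lemma distAvg_le_one {X : Type*} [MetricSpace X] (f : ℕ → X → X) (p : ℕ → ℕ)
    (x y : X) (ε : ℝ) (n : ℕ) : distAvg f p x y ε n ≤ 1 := by
  rcases Nat.eq_zero_or_pos n with rfl | hn
  · simp [distAvg]
  · rw [distAvg, div_le_one (by exact_mod_cast hn)]
    calc (∑ i ∈ Finset.range n, if dist (orb f (p i) x) (orb f (p i) y) < ε then (1:ℝ) else 0)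
        ≤ ∑ i ∈ Finset.range n, 1 := by
          apply Finset.sum_le_sum; intro i _; split <;> norm_num
      _ = n := by simp

lemma distAvg_lower {X : Type*} [MetricSpace X] (f : ℕ → X → X) (t : ℕ → ℕ)
    (x y : X) (ε : ℝ) {A n : ℕ} (hAn : A ≤ n) (hn : 0 < n)
    (h : ∀ i, A ≤ i → i < n → dist (orb f (t i) x) (orb f (t i) y) < ε) :
    1 - (A:ℝ)/n ≤ distAvg f t x y ε n := by
  have hnpos : (0:ℝ) < n := by exact_mod_cast hn
  rw [distAvg]
  have hsum : (n:ℝ) - A ≤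
      ∑ i ∈ Finset.range n, if dist (orb f (t i) x) (orb f (t i) y) < ε then (1:ℝ) else 0 := by
    rw [Finset.range_eq_Ico, ← Finset.sum_Ico_consecutive _ (Nat.zero_le A) hAn]
    have h1 : (0:ℝ) ≤ ∑ i ∈ Finset.Ico 0 A,
        if dist (orb f (t i) x) (orb f (t i) y) < ε then (1:ℝ) else 0 := by
      apply Finset.sum_nonneg; intro i _; split <;> norm_num
    have h2 : ∑ i ∈ Finset.Ico A n,
        (if dist (orb f (t i) x) (orb f (t i) y) < ε then (1:ℝ) else 0) = ((n - A : ℕ) : ℝ) := by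
      have hco : ∀ i ∈ Finset.Ico A n,
          (if dist (orb f (t i) x) (orb f (t i) y) < ε then (1:ℝ) else 0) = 1 :=
        fun i hi => if_pos (h i (Finset.mem_Ico.1 hi).1 (Finset.mem_Ico.1 hi).2)
      rw [Finset.sum_congr rfl hco, Finset.sum_const, Nat.card_Ico, nsmul_eq_mul, mul_one]
    have h3 : ((n - A : ℕ) : ℝ) = (n:ℝ) - A := by
      push_cast [Nat.cast_sub hAn]; ring
    linarith [h2 ▸ h3 ▸ le_refl ((n:ℝ) - A)]
  calc 1 - (A:ℝ)/n = ((n:ℝ) - A)/n := by field_simp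
    _ ≤ _ := by gcongr

lemma distAvg_upper {X : Type*} [MetricSpace X] (f : ℕ → X → X) (t : ℕ → ℕ)
    (x y : X) (ε : ℝ) {A n : ℕ} (hAn : A ≤ n) (hn : 0 < n)
    (h : ∀ i, A ≤ i → i < n → ¬ dist (orb f (t i) x) (orb f (t i) y) < ε) :
    distAvg f t x y ε n ≤ (A:ℝ)/n := by
  have hnpos : (0:ℝ) < n := by exact_mod_cast hn
  rw [distAvg]
  have hsum : (∑ i ∈ Finset.range n,
      if dist (orb f (t i) x) (orb f (t i) y) < ε then (1:ℝ) else 0) ≤ A := by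
    rw [Finset.range_eq_Ico, ← Finset.sum_Ico_consecutive _ (Nat.zero_le A) hAn]
    have h1 : ∑ i ∈ Finset.Ico 0 A,
        (if dist (orb f (t i) x) (orb f (t i) y) < ε then (1:ℝ) else 0) ≤ A := by
      calc ∑ i ∈ Finset.Ico 0 A,
          (if dist (orb f (t i) x) (orb f (t i) y) < ε then (1:ℝ) else 0)
          ≤ ∑ i ∈ Finset.Ico 0 A, 1 := by
            apply Finset.sum_le_sum; intro i _; split <;> norm_num
        _ = A := by simp
    have h2 : ∑ i ∈ Finset.Ico A n,
        (if dist (orb f (t i) x) (orb f (t i) y) < ε then (1:ℝ) else 0) = 0 := by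
      apply Finset.sum_eq_zero
      intro i hi
      rw [Finset.mem_Ico] at hi
      rw [if_neg (h i hi.1 hi.2)]
    linarith
  gcongr

/-- Choice of a suitable block. -/
lemma exists_block (M J : ℕ) {η : ℝ} (hη : 0 < η) (r : ℕ) (hr : r < 2) :
    ∃ k : ℕ, (k + 1) % 2 = r ∧ M ≤ Nat.factorial (k+2) ∧ J ≤ Nat.factorial (k+1) ∧
      ((Nat.factorial (k+1) : ℝ)) / (Nat.factorial (k+2)) ≤ η := by
  obtain ⟨K, hK⟩ := exists_nat_gt (1/η)
  set k := 2 * (M + J + K) + (r + 1) % 2 with hk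
  have hpar : (k + 1) % 2 = r := by omega
  have hf1 : k + 1 ≤ Nat.factorial (k+1) := Nat.self_le_factorial _
  have hf2 : k + 2 ≤ Nat.factorial (k+2) := Nat.self_le_factorial _
  refine ⟨k, hpar, by omega, by omega, ?_⟩
  have hAn : Nat.factorial (k+2) = (k+2) * Nat.factorial (k+1) := Nat.factorial_succ (k+1)
  have hApos : (0:ℝ) < Nat.factorial (k+1) := by exact_mod_cast Nat.factorial_pos (k+1)
  have hnpos : (0:ℝ) < Nat.factorial (k+2) := by exact_mod_cast Nat.factorial_pos (k+2)
  rw [div_le_iff₀ hnpos]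
  have hcast : ((Nat.factorial (k+2)) : ℝ) = ((k:ℝ)+2) * Nat.factorial (k+1) := by
    exact_mod_cast congrArg (Nat.cast : ℕ → ℝ) hAn
  have hKk : (1/η : ℝ) < (k:ℝ) + 2 := by
    refine lt_of_lt_of_le hK ?_
    have : K ≤ k := by omega
    exact_mod_cast Nat.le_succ_of_le (Nat.le_succ_of_le this)
  have h1 : 1 < η * ((k:ℝ)+2) := by
    rw [div_lt_iff₀ hη] at hKk
    linarith
  rw [hcast]
  nlinarith

theorem stmt14 {X : Type*} [MetricSpace X] (f : ℕ → X → X) (p q : ℕ → ℕ)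
    (hp : StrictMono p) (hq : StrictMono q) :
    ∃ t : ℕ → ℕ, StrictMono t ∧ (∀ i, t i ∈ Set.range p ∪ Set.range q) ∧
      ∀ x y : X,
        Tendsto (fun i => dist (orb f (p i) x) (orb f (p i) y)) atTop (nhds 0) →
        0 < liminf (fun i => dist (orb f (q i) x) (orb f (q i) y)) atTop →
        (∀ ε > 0, limsup (distAvg f t x y ε) atTop = 1) ∧
        ∃ δ > 0, liminf (distAvg f t x y δ) atTop = 0 := by
  refine ⟨tseq p q, tseq_strictMono hp hq, tseq_mem p q, ?_⟩
  intro x y hxy hlim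
  set t := tseq p q with ht
  have hbdd_le : ∀ ε : ℝ, IsBoundedUnder (· ≤ ·) atTop (distAvg f t x y ε) :=
    fun ε => isBoundedUnder_of ⟨1, distAvg_le_one f t x y ε⟩
  have hbdd_ge : ∀ ε : ℝ, IsBoundedUnder (· ≥ ·) atTop (distAvg f t x y ε) :=
    fun ε => isBoundedUnder_of ⟨0, distAvg_nonneg f t x y ε⟩
  constructor
  · -- limsup part
    intro ε hε
    obtain ⟨J, hJ⟩ : ∃ J, ∀ j ≥ J, dist (orb f (p j) x) (orb f (p j) y) < ε :=
      eventually_atTop.1 (hxy.eventually (eventually_lt_nhds hε))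
    have key : ∀ η : ℝ, 0 < η → ∃ᶠ n in atTop, 1 - η ≤ distAvg f t x y ε n := by
      intro η hη
      rw [frequently_atTop]
      intro M
      obtain ⟨k, hpar, hM, hJk, hratio⟩ := exists_block M J hη 0 (by norm_num)
      set A := Nat.factorial (k+1) with hA
      set n := Nat.factorial (k+2) with hn
      have hAn : A ≤ n := Nat.factorial_le (by omega)
      have hnpos : 0 < n := Nat.factorial_pos _
      refine ⟨n, hM, ?_⟩
      have hlow := distAvg_lower f t x y ε hAn hnpos (fun i hiA hin => by
        have hblk : blk i = k + 1 := blk_eq hiA hin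
        obtain ⟨m, hm, hmeq⟩ := tseq_p hp hq (n := i) (by rw [hblk]; exact hpar)
        rw [← ht] at hmeq
        rw [hmeq]
        exact hJ m (le_trans hJk (le_trans hiA hm)))
      linarith
    have h1 : limsup (distAvg f t x y ε) atTop ≤ 1 :=
      limsup_le_of_le ((hbdd_ge ε).isCoboundedUnder_le)
        (Eventually.of_forall (distAvg_le_one f t x y ε))
    have h2 : 1 ≤ limsup (distAvg f t x y ε) atTop := by
      apply le_of_forall_pos_le_add
      intro η hη
      have := le_limsup_of_frequently_le (key η hη) (hbdd_le ε)
      linarith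
    linarith
  · -- liminf part
    set L := liminf (fun i => dist (orb f (q i) x) (orb f (q i) y)) atTop with hL
    refine ⟨L/2, by linarith, ?_⟩
    have hev : ∀ᶠ i in atTop, L/2 < dist (orb f (q i) x) (orb f (q i) y) :=
      eventually_lt_of_lt_liminf (by linarith)
        (isBoundedUnder_of ⟨0, fun i => dist_nonneg⟩)
    obtain ⟨J, hJ⟩ := eventually_atTop.1 hev
    have key : ∀ η : ℝ, 0 < η → ∃ᶠ n in atTop, distAvg f t x y (L/2) n ≤ η := by
      intro η hη
      rw [frequently_atTop]
      intro M
      obtain ⟨k, hpar, hM, hJk, hratio⟩ := exists_block M J hη 1 (by norm_num)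
      set A := Nat.factorial (k+1) with hA
      set n := Nat.factorial (k+2) with hn
      have hAn : A ≤ n := Nat.factorial_le (by omega)
      have hnpos : 0 < n := Nat.factorial_pos _
      refine ⟨n, hM, ?_⟩
      have hup := distAvg_upper f t x y (L/2) hAn hnpos (fun i hiA hin => by
        have hblk : blk i = k + 1 := blk_eq hiA hin
        obtain ⟨m, hm, hmeq⟩ := tseq_q hp hq (n := i) (by rw [hblk]; omega)
        rw [← ht] at hmeq
        rw [hmeq, not_lt]
        exact le_of_lt (hJ m (le_trans hJk (le_trans hiA hm))))
      linarith
    have h1 : 0 ≤ liminf (distAvg f t x y (L/2)) atTop :=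
      le_liminf_of_le ((hbdd_le (L/2)).isCoboundedUnder_ge)
        (Eventually.of_forall (distAvg_nonneg f t x y (L/2)))
    have h2 : liminf (distAvg f t x y (L/2)) atTop ≤ 0 := by
      apply le_of_forall_pos_le_add
      intro η hη
      have := liminf_le_of_frequently_le (key η hη) (hbdd_ge (L/2))
      linarith
    linarith
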